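/- arXiv:1801.03265 — 4 statements merged into one kernel-verified Lean document; each statement's English description precedes it below -/
import Mathlib

section
/- In the optimistic OMD updates w_t = argmin_{w∈Ω}{⟨w, m_t⟩ + D_{ψ_t}(w, w'_t)} and w'_{t+1} = argmin_{w∈Ω}{⟨w, ℓ̂_t + a_t⟩ + D_{ψ_t}(w, w'_t)}, if the condition ⟨w_t - w'_{t+1}, ℓ̂_t - m_t + a_t⟩ ≤ ⟨w_t, a_t⟩ holds, then for all u ∈ Ω: ⟨w_t - u, ℓ̂_t⟩ ≤ D_{ψ_t}(u, w'_t) - D_{ψ_t}(u, w'_{t+1}) + ⟨u, a_t⟩ - D_{ψ_t}(w'_{t+1}, w_t) - D_{ψ_t}(w_t, w'_t). -/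
open scoped RealInnerProductSpace

/-! The optimistic update step is the Bregman proximal inequality applied twice, once to each
argmin: first-order optimality of `x` for `w ↦ ⟪w, c⟫ + D(w, v)` over `Ω`, combined with the
three-point identity for `D`, gives `⟪x - u, c⟫ ≤ D(u, v) - D(u, x) - D(x, v)`. Summing the
instance for `w'ₜ₊₁` (tested at `u`) and the one for `wₜ` (tested at `w'ₜ₊₁`), the leftover
linear terms are exactly the assumed bound on `⟪wₜ - w'ₜ₊₁, ℓ̂ₜ - mₜ + aₜ⟫`. -/

/-- Bregman divergence of `ψ` with gradient map `g`. -/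
noncomputable def breg {K : ℕ} (ψ : EuclideanSpace ℝ (Fin K) → ℝ)
    (g : EuclideanSpace ℝ (Fin K) → EuclideanSpace ℝ (Fin K))
    (u v : EuclideanSpace ℝ (Fin K)) : ℝ :=
  ψ u - ψ v - ⟪g v, u - v⟫

theorem IsMinOn.inner_gradient_sub_nonneg {E : Type*} [NormedAddCommGroup E]
    [InnerProductSpace ℝ E] [CompleteSpace E] {s : Set E} {f : E → ℝ} {f' x y : E}
    (hmin : IsMinOn f s x) (hs : Convex ℝ s) (hx : x ∈ s) (hy : y ∈ s)
    (hf : HasGradientAt f f' x) : 0 ≤ ⟪f', y - x⟫ := by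
  have := hmin.localize.hasFDerivWithinAt_nonneg
    (hasGradientAt_iff_hasFDerivAt.mp hf).hasFDerivWithinAt
    (sub_mem_posTangentConeAt_of_segment_subset (hs.segment_subset hx hy))
  rwa [InnerProductSpace.toDual_apply_apply] at this

section Bregman

variable {K : ℕ} {ψ : EuclideanSpace ℝ (Fin K) → ℝ}
  {g : EuclideanSpace ℝ (Fin K) → EuclideanSpace ℝ (Fin K)}

theorem breg_sub_breg_sub_breg (u v x : EuclideanSpace ℝ (Fin K)) :
    breg ψ g u v - breg ψ g u x - breg ψ g x v = ⟪g x - g v, u - x⟫ := by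
  simp only [breg, inner_sub_left, inner_sub_right]
  ring

theorem hasGradientAt_inner_add_breg {c v x : EuclideanSpace ℝ (Fin K)}
    (hψ : HasGradientAt ψ (g x) x) :
    HasGradientAt (fun w => ⟪w, c⟫ + breg ψ g w v) (c + (g x - g v)) x := by
  have hinner (d : EuclideanSpace ℝ (Fin K)) :
      HasFDerivAt (fun w => ⟪w, d⟫) (InnerProductSpace.toDual ℝ _ d) x := by
    convert (InnerProductSpace.toDual ℝ _ d : EuclideanSpace ℝ (Fin K) →L[ℝ] ℝ).hasFDerivAt
      using 1
    funext w
    rw [InnerProductSpace.toDual_apply_apply, real_inner_comm]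
  have hbreg : (fun w => ⟪w, c⟫ + breg ψ g w v)
      = fun w => ⟪w, c⟫ + (ψ w - ψ v - (⟪w, g v⟫ - ⟪v, g v⟫)) := by
    funext w
    rw [breg, inner_sub_right, real_inner_comm w, real_inner_comm v]
  rw [hbreg, hasGradientAt_iff_hasFDerivAt]
  rw [hasGradientAt_iff_hasFDerivAt] at hψ
  simpa only [map_add, map_sub, sub_zero] using
    (hinner c).fun_add ((hψ.sub_const (ψ v)).fun_sub ((hinner (g v)).sub_const ⟪v, g v⟫))

theorem inner_sub_le_breg_of_isMinOn {Ω : Set (EuclideanSpace ℝ (Fin K))} (hΩ : Convex ℝ Ω)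
    {c v x u : EuclideanSpace ℝ (Fin K)} (hψ : HasGradientAt ψ (g x) x) (hx : x ∈ Ω)
    (hmin : IsMinOn (fun w => ⟪w, c⟫ + breg ψ g w v) Ω x) (hu : u ∈ Ω) :
    ⟪x - u, c⟫ ≤ breg ψ g u v - breg ψ g u x - breg ψ g x v := by
  have hopt := hmin.inner_gradient_sub_nonneg hΩ hx hu (hasGradientAt_inner_add_breg hψ)
  have hflip : ⟪x - u, c⟫ = -⟪c, u - x⟫ := by
    rw [real_inner_comm, ← inner_neg_right, neg_sub]
  rw [breg_sub_breg_sub_breg, hflip]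
  rw [inner_add_left] at hopt
  linarith

end Bregman

theorem stmt_6_general {K : ℕ} (Ω : Set (EuclideanSpace ℝ (Fin K))) (hΩ : Convex ℝ Ω)
    (ψ : EuclideanSpace ℝ (Fin K) → ℝ)
    (g : EuclideanSpace ℝ (Fin K) → EuclideanSpace ℝ (Fin K))
    (hg : ∀ v, HasGradientAt ψ (g v) v)
    (m ℓhat a wt wt' wt1' : EuclideanSpace ℝ (Fin K))
    (hwt : wt ∈ Ω) (hwt1' : wt1' ∈ Ω)
    (hmin1 : ∀ w ∈ Ω, ⟪wt, m⟫ + breg ψ g wt wt' ≤ ⟪w, m⟫ + breg ψ g w wt')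
    (hmin2 : ∀ w ∈ Ω,
      ⟪wt1', ℓhat + a⟫ + breg ψ g wt1' wt' ≤ ⟪w, ℓhat + a⟫ + breg ψ g w wt')
    (hcond : ⟪wt - wt1', ℓhat - m + a⟫ ≤ ⟪wt, a⟫)
    (u : EuclideanSpace ℝ (Fin K)) (hu : u ∈ Ω) :
    ⟪wt - u, ℓhat⟫ ≤
      breg ψ g u wt' - breg ψ g u wt1' + ⟪u, a⟫
        - breg ψ g wt1' wt - breg ψ g wt wt' := by
  have hprox1 := inner_sub_le_breg_of_isMinOn hΩ (hg wt) hwt (isMinOn_iff.mpr hmin1) hwt1'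
  have hprox2 := inner_sub_le_breg_of_isMinOn hΩ (hg wt1') hwt1' (isMinOn_iff.mpr hmin2) hu
  have hsplit : ⟪wt - u, ℓhat⟫ = ⟪wt - wt1', ℓhat - m + a⟫ - ⟪wt, a⟫ + ⟪wt - wt1', m⟫
      + ⟪wt1' - u, ℓhat + a⟫ + ⟪u, a⟫ := by
    simp only [inner_sub_left, inner_add_right, inner_sub_right]
    ring
  linarith

theorem stmt_6 {K : ℕ} (Ω : Set (EuclideanSpace ℝ (Fin K))) (hΩ : Convex ℝ Ω)
    (ψ : EuclideanSpace ℝ (Fin K) → ℝ)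
    (g : EuclideanSpace ℝ (Fin K) → EuclideanSpace ℝ (Fin K))
    (hg : ∀ v, HasGradientAt ψ (g v) v)
    (hψ : ConvexOn ℝ Ω ψ)
    (m ℓhat a wt wt' wt1' : EuclideanSpace ℝ (Fin K))
    (hwt : wt ∈ Ω) (hwt' : wt' ∈ Ω) (hwt1' : wt1' ∈ Ω)
    (hmin1 : ∀ w ∈ Ω, ⟪wt, m⟫ + breg ψ g wt wt' ≤ ⟪w, m⟫ + breg ψ g w wt')
    (hmin2 : ∀ w ∈ Ω,
      ⟪wt1', ℓhat + a⟫ + breg ψ g wt1' wt' ≤ ⟪w, ℓhat + a⟫ + breg ψ g w wt')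
    (hcond : ⟪wt - wt1', ℓhat - m + a⟫ ≤ ⟪wt, a⟫)
    (u : EuclideanSpace ℝ (Fin K)) (hu : u ∈ Ω) :
    ⟪wt - u, ℓhat⟫ ≤
      breg ψ g u wt' - breg ψ g u wt1' + ⟪u, a⟫
        - breg ψ g wt1' wt - breg ψ g wt wt' :=
  stmt_6_general Ω hΩ ψ g hg m ℓhat a wt wt' wt1' hwt hwt1' hmin1 hmin2 hcond u hu
end

section
/- Let w ∈ ℝ^K have strictly positive coordinates, 0 < η_i ≤ 1/81, and suppose w' satisfies ∑_{i=1}^K (1/η_i)(w'_i - w_i)²/w_i² ≤ 1. Then for every h ∈ ℝ^K: 0.9·√(∑_i (1/η_i) h_i²/w_i²) ≤ √(∑_i (1/η_i) h_i²/(w'_i)²) ≤ 1.2·√(∑_i (1/η_i) h_i²/w_i²). -/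
/-!
Each summand of the Dikin-ellipsoid condition is at most `1`, and `1 / η i ≥ 81`, so every
coordinate moves by at most a ninth: `|w' i - w i| ≤ w i / 9`. Hence `1 / w' i ^ 2` lies between
`(10/9)⁻² = 0.81` and `(8/9)⁻² = 81/64 ≤ 1.44` times `1 / w i ^ 2`, termwise in the local norm.
-/

open Finset

section

variable {ι : Type*} [Fintype ι]

/-- The squared local norm of `h` at `w` for the log-barrier `∑ i, (1 / η i) * log (1 / w i)`. -/
noncomputable def barrierNormSq (η w h : ι → ℝ) : ℝ := ∑ i, (1 / η i) * h i ^ 2 / w i ^ 2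

lemma barrierNormSq_nonneg {η : ι → ℝ} (hη : ∀ i, 0 ≤ η i) (w h : ι → ℝ) :
    0 ≤ barrierNormSq η w h :=
  sum_nonneg fun i _ => by have := hη i; positivity

lemma abs_sub_le_of_barrierNormSq_sub_le_one {η w w' : ι → ℝ} {δ : ℝ} (hδ : 0 ≤ δ)
    (hw : ∀ i, 0 < w i) (hη : ∀ i, 0 < η i) (hηδ : ∀ i, η i ≤ δ ^ 2)
    (hball : barrierNormSq η w (w' - w) ≤ 1) (i : ι) :
    |w' i - w i| ≤ δ * w i := by
  have hwi := hw i
  have hηi := hη i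
  have hterm : (1 / η i) * (w' i - w i) ^ 2 / w i ^ 2 ≤ 1 :=
    (single_le_sum (f := fun j => (1 / η j) * (w' - w) j ^ 2 / w j ^ 2)
      (fun j _ => by have := hη j; positivity) (mem_univ i)).trans hball
  have hsq : (w' i - w i) ^ 2 ≤ (δ * w i) ^ 2 := by
    rw [div_le_one (by positivity), one_div, inv_mul_le_iff₀ hηi] at hterm
    calc (w' i - w i) ^ 2 ≤ η i * w i ^ 2 := hterm
      _ ≤ δ ^ 2 * w i ^ 2 := by gcongr; exact hηδ i
      _ = (δ * w i) ^ 2 := by ring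
  exact abs_le_of_sq_le_sq hsq (by positivity)

lemma div_sq_le_of_abs_sub_le {a x y δ : ℝ} (ha : 0 ≤ a) (hy : 0 < y) (hδ : δ < 1)
    (hxy : |x - y| ≤ δ * y) : a / x ^ 2 ≤ ((1 - δ) ^ 2)⁻¹ * (a / y ^ 2) := by
  have hx : (1 - δ) * y ≤ x := by linarith [(abs_le.mp hxy).1]
  have hpos : 0 < (1 - δ) * y := mul_pos (by linarith) hy
  calc a / x ^ 2 ≤ a / ((1 - δ) * y) ^ 2 := by gcongr
    _ = ((1 - δ) ^ 2)⁻¹ * (a / y ^ 2) := by rw [mul_pow]; field_simp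

lemma le_div_sq_of_abs_sub_le {a x y δ : ℝ} (ha : 0 ≤ a) (hy : 0 < y) (hδ : δ < 1)
    (hxy : |x - y| ≤ δ * y) : ((1 + δ) ^ 2)⁻¹ * (a / y ^ 2) ≤ a / x ^ 2 := by
  have hx : x ≤ (1 + δ) * y := by linarith [(abs_le.mp hxy).2]
  have hpos : 0 < x := by linarith [(abs_le.mp hxy).1, mul_pos (by linarith : 0 < 1 - δ) hy]
  calc ((1 + δ) ^ 2)⁻¹ * (a / y ^ 2) = a / ((1 + δ) * y) ^ 2 := by
        have : 0 < 1 + δ := by nlinarith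
        rw [mul_pow]; field_simp
    _ ≤ a / x ^ 2 := by gcongr

variable {η w w' : ι → ℝ} {δ : ℝ}

lemma barrierNormSq_le_of_abs_sub_le (hη : ∀ i, 0 ≤ η i) (hw : ∀ i, 0 < w i) (hδ : δ < 1)
    (hclose : ∀ i, |w' i - w i| ≤ δ * w i) (h : ι → ℝ) :
    barrierNormSq η w' h ≤ ((1 - δ) ^ 2)⁻¹ * barrierNormSq η w h := by
  rw [barrierNormSq, barrierNormSq, mul_sum]
  exact sum_le_sum fun i _ =>
    div_sq_le_of_abs_sub_le (by have := hη i; positivity) (hw i) hδ (hclose i)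

lemma le_barrierNormSq_of_abs_sub_le (hη : ∀ i, 0 ≤ η i) (hw : ∀ i, 0 < w i) (hδ : δ < 1)
    (hclose : ∀ i, |w' i - w i| ≤ δ * w i) (h : ι → ℝ) :
    ((1 + δ) ^ 2)⁻¹ * barrierNormSq η w h ≤ barrierNormSq η w' h := by
  rw [barrierNormSq, barrierNormSq, mul_sum]
  exact sum_le_sum fun i _ =>
    le_div_sq_of_abs_sub_le (by have := hη i; positivity) (hw i) hδ (hclose i)

end

theorem stmt_9 {K : ℕ} (w w' : Fin K → ℝ) (η : Fin K → ℝ)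
    (hw : ∀ i, 0 < w i) (hη : ∀ i, 0 < η i ∧ η i ≤ 1/81)
    (hball : ∑ i, (1 / η i) * (w' i - w i)^2 / (w i)^2 ≤ 1)
    (h : Fin K → ℝ) :
    0.9 * Real.sqrt (∑ i, (1 / η i) * (h i)^2 / (w i)^2) ≤
        Real.sqrt (∑ i, (1 / η i) * (h i)^2 / (w' i)^2) ∧
      Real.sqrt (∑ i, (1 / η i) * (h i)^2 / (w' i)^2) ≤
        1.2 * Real.sqrt (∑ i, (1 / η i) * (h i)^2 / (w i)^2) := by
  show 0.9 * √(barrierNormSq η w h) ≤ √(barrierNormSq η w' h) ∧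
    √(barrierNormSq η w' h) ≤ 1.2 * √(barrierNormSq η w h)
  have hη0 i : 0 ≤ η i := (hη i).1.le
  have hclose : ∀ i, |w' i - w i| ≤ 1 / 9 * w i :=
    abs_sub_le_of_barrierNormSq_sub_le_one (by norm_num) hw (fun i => (hη i).1)
      (fun i => by linarith [(hη i).2]) hball
  have hlow := le_barrierNormSq_of_abs_sub_le hη0 hw (by norm_num) hclose h
  have hup := barrierNormSq_le_of_abs_sub_le hη0 hw (by norm_num) hclose h
  have hS := barrierNormSq_nonneg hη0 w h
  norm_num at hlow hup
  constructor
  · rw [Real.le_sqrt (by positivity) (barrierNormSq_nonneg hη0 w' h), mul_pow, Real.sq_sqrt hS]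
    linarith
  · rw [Real.sqrt_le_iff, mul_pow, Real.sq_sqrt hS]
    exact ⟨by positivity, by linarith⟩
end

section
/- Let η ∈ (0, 1/162], let w ∈ ℝ^K with w_i > 0 and ∑_i w_i ≤ 1, and let ℓ̂, m ∈ ℝ^K satisfy w_i·|ℓ̂_i - m_i| ≤ 3 for all i and η·∑_{i=1}^K w_i²(ℓ̂_i - m_i)² ≤ 1/18. Then the dual-norm bound √(∑_{i=1}^K η·w_i²·(ℓ̂_i - m_i + a_i)²) ≤ 1/3 holds both when a_i = 0 and when a_i = 6η·w_i·(ℓ̂_i - m_i)². -/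
/-! Writing `u i = w i * (ℓhat i - m i)`, the perturbed term is `u i * (1 + 6 η u i)` and
`|6 η u i| ≤ 6 · 162⁻¹ · 3 = 1/9`, so the perturbation inflates the squared norm by at most
`(10/9)²`; the budget `η ∑ u i² ≤ 1/18` then leaves `(10/9)² / 18 ≤ 1/9 = (1/3)²`. -/

lemma sq_add_mul_sq_le_of_abs_mul_le {u c ε : ℝ} (h : |c * u| ≤ ε) :
    (u + c * u ^ 2) ^ 2 ≤ (1 + ε) ^ 2 * u ^ 2 := by
  have hfactor : |1 + c * u| ≤ 1 + ε := by
    calc |1 + c * u| ≤ |1| + |c * u| := abs_add_le _ _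
      _ ≤ 1 + ε := by rw [abs_one]; linarith
  obtain ⟨hlo, hhi⟩ := abs_le.mp hfactor
  calc (u + c * u ^ 2) ^ 2 = (1 + c * u) ^ 2 * u ^ 2 := by ring
    _ ≤ (1 + ε) ^ 2 * u ^ 2 := mul_le_mul_of_nonneg_right (sq_le_sq' hlo hhi) (sq_nonneg u)

lemma sum_mul_sq_add_mul_sq_le {ι : Type*} [Fintype ι] {η c ε : ℝ} (hη : 0 ≤ η) (u : ι → ℝ)
    (h : ∀ i, |c * u i| ≤ ε) :
    ∑ i, η * (u i + c * u i ^ 2) ^ 2 ≤ (1 + ε) ^ 2 * (η * ∑ i, u i ^ 2) := by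
  rw [Finset.mul_sum, Finset.mul_sum]
  refine Finset.sum_le_sum fun i _ => ?_
  calc η * (u i + c * u i ^ 2) ^ 2 ≤ η * ((1 + ε) ^ 2 * u i ^ 2) :=
        mul_le_mul_of_nonneg_left (sq_add_mul_sq_le_of_abs_mul_le (h i)) hη
    _ = (1 + ε) ^ 2 * (η * u i ^ 2) := by ring

theorem stmt_10_general {K : ℕ} (η : ℝ) (hη : 0 < η ∧ η ≤ 1/162)
    (w ℓhat m : Fin K → ℝ) (hw : ∀ i, 0 < w i)
    (hbd : ∀ i, w i * |ℓhat i - m i| ≤ 3)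
    (hsum : η * ∑ i, (w i)^2 * (ℓhat i - m i)^2 ≤ 1/18) :
    Real.sqrt (∑ i, η * (w i)^2 * (ℓhat i - m i + 0)^2) ≤ 1/3 ∧
      Real.sqrt (∑ i, η * (w i)^2 *
        (ℓhat i - m i + 6 * η * w i * (ℓhat i - m i)^2)^2) ≤ 1/3 := by
  obtain ⟨hη0, hη1⟩ := hη
  set u : Fin K → ℝ := fun i => w i * (ℓhat i - m i) with hu_def
  have hu : ∀ i, |u i| ≤ 3 := fun i => by
    rw [hu_def, abs_mul, abs_of_pos (hw i)]; exact hbd i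
  have hnorm : η * ∑ i, u i ^ 2 ≤ 1/18 := by simpa only [hu_def, mul_pow] using hsum
  have hperturb : ∀ i, |6 * η * u i| ≤ 1/9 := fun i => by
    rw [abs_mul, abs_of_pos (by positivity : 0 < 6 * η)]
    nlinarith [hu i, abs_nonneg (u i)]
  refine ⟨(Real.sqrt_le_left (by norm_num)).mpr ?_, (Real.sqrt_le_left (by norm_num)).mpr ?_⟩
  · calc ∑ i, η * (w i)^2 * (ℓhat i - m i + 0)^2 = η * ∑ i, u i ^ 2 := by
          rw [Finset.mul_sum]; exact Finset.sum_congr rfl fun i _ => by ring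
      _ ≤ (1/3)^2 := by linarith
  · calc ∑ i, η * (w i)^2 * (ℓhat i - m i + 6 * η * w i * (ℓhat i - m i)^2)^2
          = ∑ i, η * (u i + 6 * η * u i ^ 2) ^ 2 :=
            Finset.sum_congr rfl fun i _ => by ring
      _ ≤ (1 + 1/9) ^ 2 * (η * ∑ i, u i ^ 2) := sum_mul_sq_add_mul_sq_le hη0.le u hperturb
      _ ≤ (1 + 1/9) ^ 2 * (1/18) := by gcongr
      _ ≤ (1/3)^2 := by norm_num

theorem stmt_10 {K : ℕ} (η : ℝ) (hη : 0 < η ∧ η ≤ 1/162)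
    (w ℓhat m : Fin K → ℝ) (hw : ∀ i, 0 < w i) (hw1 : ∑ i, w i ≤ 1)
    (hbd : ∀ i, w i * |ℓhat i - m i| ≤ 3)
    (hsum : η * ∑ i, (w i)^2 * (ℓhat i - m i)^2 ≤ 1/18) :
    Real.sqrt (∑ i, η * (w i)^2 * (ℓhat i - m i + 0)^2) ≤ 1/3 ∧
      Real.sqrt (∑ i, η * (w i)^2 *
        (ℓhat i - m i + 6 * η * w i * (ℓhat i - m i)^2)^2) ≤ 1/3 :=
  stmt_10_general η hη w ℓhat m hw hbd hsum
end

section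
/- Fix an arm i. Let i_1, …, i_T ∈ [K] be played arms, α_i(t) = max{s < t : i_s = i} (or 0), ℓ_{t,i} ∈ [-1,1] with ℓ_{0,i} = 0, and w_{t,i} > 0. Then ∑_{t : i_t = i} |ℓ_{t,i} - ℓ_{α_i(t),i}| / w_{t,i} ≤ (max_{t ∈ [T]} 1/w_{t,i}) · ∑_{s=1}^T |ℓ_{s,i} - ℓ_{s-1,i}|. -/
/-!
By the triangle inequality, `|ℓ t - ℓ (α t)|` is at most the path length of `ℓ` over
`(α t, t]`. For distinct plays `a < b` of arm `i` we have `a ≤ α b`, so these intervals are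
disjoint and their path lengths add up to at most the total path length over `[1, T]`;
the weights `1 / w t` are pulled out as their maximum.
-/

/-- `α i t` is the most recent time `s < t` (with `s ≥ 1`) at which arm `i` was
played, or `0` if no such time exists. -/
def lastPlay {K : ℕ} (it : ℕ → Fin K) (i : Fin K) (t : ℕ) : ℕ :=
  ((Finset.Ico 1 t).filter (fun s => it s = i)).sup id

open Finset

lemma abs_sub_le_sum_Ioc_abs_sub (f : ℕ → ℝ) {a b : ℕ} (hab : a ≤ b) :
    |f b - f a| ≤ ∑ s ∈ Ioc a b, |f s - f (s - 1)| := by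
  induction b, hab using Nat.le_induction with
  | base => simp
  | succ n han ih =>
    rw [sum_Ioc_succ_top han, Nat.add_sub_cancel]
    linarith [abs_sub_le (f (n + 1)) (f n) (f a)]

lemma sum_abs_sub_le_sum_abs_sub_of_pairwiseDisjoint (f : ℕ → ℝ) {S U : Finset ℕ}
    {α : ℕ → ℕ} (hα : ∀ t ∈ S, α t ≤ t)
    (hdisj : (S : Set ℕ).PairwiseDisjoint fun t => Ioc (α t) t)
    (hU : ∀ t ∈ S, Ioc (α t) t ⊆ U) :
    ∑ t ∈ S, |f t - f (α t)| ≤ ∑ s ∈ U, |f s - f (s - 1)| :=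
  calc ∑ t ∈ S, |f t - f (α t)|
      ≤ ∑ t ∈ S, ∑ s ∈ Ioc (α t) t, |f s - f (s - 1)| :=
        sum_le_sum fun t ht => abs_sub_le_sum_Ioc_abs_sub f (hα t ht)
    _ = ∑ s ∈ S.biUnion (fun t => Ioc (α t) t), |f s - f (s - 1)| := (sum_biUnion hdisj).symm
    _ ≤ ∑ s ∈ U, |f s - f (s - 1)| :=
        sum_le_sum_of_subset_of_nonneg (biUnion_subset.mpr hU) fun _ _ _ => abs_nonneg _

section lastPlay

variable {K : ℕ} (it : ℕ → Fin K) (i : Fin K)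

lemma lastPlay_lt {t : ℕ} (ht : 0 < t) : lastPlay it i t < t := by
  rw [lastPlay, Finset.sup_lt_iff ht]
  intro s hs
  exact (mem_Ico.mp (mem_filter.mp hs).1).2

lemma le_lastPlay {s t : ℕ} (hs : 1 ≤ s) (hst : s < t) (his : it s = i) :
    s ≤ lastPlay it i t :=
  le_sup (f := id) (mem_filter.mpr ⟨mem_Ico.mpr ⟨hs, hst⟩, his⟩)

lemma pairwiseDisjoint_Ioc_lastPlay :
    {t | 1 ≤ t ∧ it t = i}.PairwiseDisjoint fun t => Ioc (lastPlay it i t) t := by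
  intro a ha b hb hab
  wlog hlt : a < b generalizing a b
  · exact (this hb ha hab.symm (by omega)).symm
  have hab' := le_lastPlay it i ha.1 hlt ha.2
  refine disjoint_left.mpr fun s hsa hsb => ?_
  have := (mem_Ioc.mp hsa).2
  have := (mem_Ioc.mp hsb).1
  omega

end lastPlay

theorem stmt_13_general {K : ℕ} (T : ℕ) (hT : 1 ≤ T)
    (it : ℕ → Fin K) (i : Fin K) (ℓ : ℕ → ℝ) (w : ℕ → ℝ)
    (hw : ∀ t ∈ Finset.Icc 1 T, 0 < w t) :
    ∑ t ∈ (Finset.Icc 1 T).filter (fun t => it t = i),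
        |ℓ t - ℓ (lastPlay it i t)| / w t ≤
      ((Finset.Icc 1 T).sup' (Finset.nonempty_Icc.2 hT) (fun t => 1 / w t)) *
        ∑ s ∈ Finset.Icc 1 T, |ℓ s - ℓ (s - 1)| := by
  set S := (Icc 1 T).filter (fun t => it t = i)
  set M := (Icc 1 T).sup' (nonempty_Icc.2 hT) (fun t => 1 / w t)
  have hmemS : ∀ t ∈ S, 1 ≤ t ∧ t ≤ T ∧ it t = i := fun t ht => by
    obtain ⟨htT, hit⟩ := mem_filter.mp ht
    exact ⟨(mem_Icc.mp htT).1, (mem_Icc.mp htT).2, hit⟩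
  have h1 : 1 ∈ Icc 1 T := mem_Icc.mpr ⟨le_rfl, hT⟩
  have hM : 0 ≤ M := (one_div_pos.mpr (hw 1 h1)).le.trans (le_sup' (fun t => 1 / w t) h1)
  have hdisj : (S : Set ℕ).PairwiseDisjoint fun t => Ioc (lastPlay it i t) t :=
    (pairwiseDisjoint_Ioc_lastPlay it i).subset fun t ht => ⟨(hmemS t ht).1, (hmemS t ht).2.2⟩
  have hU : ∀ t ∈ S, Ioc (lastPlay it i t) t ⊆ Icc 1 T := fun t ht s hs => by
    have := hmemS t ht
    have := mem_Ioc.mp hs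
    exact mem_Icc.mpr (by omega)
  calc ∑ t ∈ S, |ℓ t - ℓ (lastPlay it i t)| / w t
      ≤ ∑ t ∈ S, M * |ℓ t - ℓ (lastPlay it i t)| := sum_le_sum fun t ht => by
        rw [← one_div_mul_eq_div]
        exact mul_le_mul_of_nonneg_right (le_sup' (fun t => 1 / w t) (mem_filter.mp ht).1)
          (abs_nonneg _)
    _ = M * ∑ t ∈ S, |ℓ t - ℓ (lastPlay it i t)| := (mul_sum _ _ _).symm
    _ ≤ M * ∑ s ∈ Icc 1 T, |ℓ s - ℓ (s - 1)| :=
        mul_le_mul_of_nonneg_left (sum_abs_sub_le_sum_abs_sub_of_pairwiseDisjoint ℓ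
          (fun t ht => (lastPlay_lt it i (hmemS t ht).1).le) hdisj hU) hM

theorem stmt_13 {K : ℕ} (T : ℕ) (hT : 1 ≤ T)
    (it : ℕ → Fin K) (i : Fin K) (ℓ : ℕ → ℝ) (w : ℕ → ℝ)
    (hℓ0 : ℓ 0 = 0)
    (hℓ : ∀ t ∈ Finset.Icc 1 T, ℓ t ∈ Set.Icc (-1 : ℝ) 1)
    (hw : ∀ t ∈ Finset.Icc 1 T, 0 < w t) :
    ∑ t ∈ (Finset.Icc 1 T).filter (fun t => it t = i),
        |ℓ t - ℓ (lastPlay it i t)| / w t ≤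
      ((Finset.Icc 1 T).sup' (Finset.nonempty_Icc.2 hT) (fun t => 1 / w t)) *
        ∑ s ∈ Finset.Icc 1 T, |ℓ s - ℓ (s - 1)| :=
  stmt_13_general T hT it i ℓ w hw
end
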